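/- arXiv:1910.10267 — 2 statements merged into one kernel-verified Lean document; each statement's English description precedes it below -/
import Mathlib

section
/- Let [c_1,…,c_n] be a continued fraction satisfying the defining conditions for Q[·] (every |c_i| ≥ 1, and |c_i| > 1 and |c_{i+1}| > 1 whenever t_i = t_{i+1}) with c_1 < 0 (so c_1 ≤ −2), and write [c_1,…,c_n] = p/q with p ≥ 0, gcd(p,q) = 1. Then [1, −c_1 − 1, −c_2, …, −c_n] = p/(q + p) as elements of ℚ ∪ {∞}, and the labeled path posets Q[c_1,…,c_n] and Q[1, −c_1 − 1, −c_2, …, −c_n] are identical (the same labeled poset). -/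
open scoped BigOperators

/-- Continued fraction value in `ℚ ∪ {∞}`, with `none` playing the role of `∞ = 1/0`.
`[ ] = ∞`, and `[c₁,…,cₙ] = c₁ + 1/[c₂,…,cₙ]` with `x + ∞ = ∞` and `1/∞ = 0`. -/
def cfVal : List ℤ → Option ℚ
  | [] => none
  | c :: cs =>
    match cfVal cs with
    | none => some (c : ℚ)
    | some x => if x = 0 then none else some ((c : ℚ) + 1 / x)

/-- A continued fraction is positive if every term is at least 1. -/
def PosCF (L : List ℤ) : Prop := ∀ a ∈ L, 1 ≤ a

/-- A continued fraction is even if every term is even and nonzero. -/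
def EvenCF (L : List ℤ) : Prop := ∀ b ∈ L, 2 ∣ b ∧ b ≠ 0

/-- `ell L i = ℓ_i = |c₁| + ⋯ + |c_i|`. -/
def ell (L : List ℤ) (i : ℕ) : ℕ := ((L.take i).map Int.natAbs).sum

/-- `typ L i = t_i = (−1)^(i−1)·sgn(c_i)` for `1 ≤ i ≤ n`, with the convention `t_0 = −1`. -/
def typ (L : List ℤ) (i : ℕ) : ℤ :=
  if i = 0 then -1 else (-1) ^ (i - 1) * Int.sign (L.getD (i - 1) 0)

/-- The conditions of Definition 3.5: every `|c_i| ≥ 1` (i.e. `c_i ≠ 0`), and whenever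
`t_i = t_{i+1}` both `|c_i| > 1` and `|c_{i+1}| > 1`. -/
def QCond (L : List ℤ) : Prop :=
  (∀ c ∈ L, c ≠ 0) ∧
  ∀ i : ℕ, 1 ≤ i → i + 1 ≤ L.length → typ L i = typ L (i + 1) →
    1 < (L.getD (i - 1) 0).natAbs ∧ 1 < (L.getD i 0).natAbs

/-- `v` is a label of the labeled path poset `Q[c₁,…,cₙ]`: `1 ≤ v ≤ ℓₙ − 1`, and `v` is not
one of the removed labels `ℓ_i` with `t_i = t_{i+1}`. -/
def kept (L : List ℤ) (v : ℕ) : Prop :=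
  1 ≤ v ∧ v < ell L L.length ∧
  ∀ i ∈ Finset.Ico 1 L.length, typ L i = typ L (i + 1) → v ≠ ell L i

open Classical in
/-- The underlying label set of `Q[c₁,…,cₙ]`. -/
noncomputable def QFinset (L : List ℤ) : Finset ℕ :=
  (Finset.Ioo 0 (ell L L.length)).filter (kept L)

/-- The index `i` of the segment `(ℓ_{i−1}, ℓ_i]` containing the label `v`. -/
def seg (L : List ℤ) (v : ℕ) : ℕ :=
  1 + ((Finset.range L.length).filter (fun i => ell L (i + 1) < v)).card

/-- `u < v` are consecutive labels of `Q[c₁,…,cₙ]`. -/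
def consec (L : List ℤ) (u v : ℕ) : Prop :=
  kept L u ∧ kept L v ∧ u < v ∧ ∀ w, u < w → w < v → ¬ kept L w

/-- The sign of the Hasse edge between consecutive labels `u < v` of `Q[c₁,…,cₙ]`:
if no label is skipped the edge lies in the segment of `v` and has sign `t_{seg v}`;
if a removed junction label `ℓ_j` (with `t_j = t_{j+1}`) is skipped, the edge joining the
two adjacent chains has sign `−t_j = −t_{seg v}`. -/
def edgeSign (L : List ℤ) (u v : ℕ) : ℤ :=
  if u + 1 = v then typ L (seg L v) else -typ L (seg L v)

/-- The covering relation of `Q[c₁,…,cₙ]`: consecutive labels `u < v` give a cover `u ⋖ v`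
when the corresponding edge sign is `1`, and a cover `v ⋖ u` when it is `−1`. -/
def pcov (L : List ℤ) (u v : ℕ) : Prop :=
  (consec L u v ∧ edgeSign L u v = 1) ∨ (consec L v u ∧ edgeSign L v u = -1)

/-- The order of the labeled path poset `Q[c₁,…,cₙ]` (on labels). -/
def ple (L : List ℤ) : ℕ → ℕ → Prop := Relation.ReflTransGen (pcov L)

/-- The order of `Q[c₁,…,cₙ]` as a relation on its underlying label set. -/
noncomputable def pleRel (L : List ℤ) :
    {v : ℕ // v ∈ QFinset L} → {v : ℕ // v ∈ QFinset L} → Prop :=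
  fun a b => ple L (a : ℕ) (b : ℕ)

/-- Order ideals (downward-closed subsets) of `Q[c₁,…,cₙ]`. -/
def isIdeal (L : List ℤ) (I : Finset ℕ) : Prop :=
  I ⊆ QFinset L ∧ ∀ u v : ℕ, ple L u v → v ∈ I → u ∈ I

/-- Writing `y = p/q` with `p ≥ 0` and `gcd(p,q) = 1`, the rational `p/(q − sgn(q)·p)`. -/
def twist (y : ℚ) : ℚ :=
  ((y.num.natAbs : ℤ) : ℚ) /
    (((y.num.sign * (y.den : ℤ)) - (y.num.sign * (y.den : ℤ)).sign * (y.num.natAbs : ℤ) : ℤ) : ℚ)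

/-- The map `p/q ↦ p/(q − sgn(q)·p)` on `ℚ ∪ {∞}` (with `∞ = 1/0`). -/
def twistO : Option ℚ → Option ℚ
  | none => none
  | some y =>
    if (y.num.sign * (y.den : ℤ)) - (y.num.sign * (y.den : ℤ)).sign * (y.num.natAbs : ℤ) = 0
    then none
    else some (((y.num.natAbs : ℤ) : ℚ) /
      (((y.num.sign * (y.den : ℤ)) - (y.num.sign * (y.den : ℤ)).sign * (y.num.natAbs : ℤ) : ℤ) : ℚ))

/-- The map `p/q ↦ p/(q + p)` on `ℚ ∪ {∞}` (with `∞ = 1/0`, so `∞ = 1/0 ↦ 1/1 = 1`). -/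
def pqPlus : Option ℚ → Option ℚ
  | none => some 1
  | some y =>
    if (y.num.sign * (y.den : ℤ)) + (y.num.natAbs : ℤ) = 0 then none
    else some (((y.num.natAbs : ℤ) : ℚ) /
      (((y.num.sign * (y.den : ℤ)) + (y.num.natAbs : ℤ) : ℤ) : ℚ))

lemma getD_map_neg (cs : List ℤ) (k : ℕ) :
    (cs.map (fun x => -x)).getD k 0 = -(cs.getD k 0) := by
  rcases lt_or_ge k cs.length with h | h
  · rw [List.getD_eq_getElem _ _ (by simpa using h), List.getD_eq_getElem _ _ h]
    simp
  · rw [List.getD_eq_default _ _ (by simpa using h), List.getD_eq_default _ _ h]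
    simp

lemma cfVal_map_neg (M : List ℤ) :
    cfVal (M.map (fun x => -x)) = (cfVal M).map (fun x => -x) := by
  induction M with
  | nil => rfl
  | cons a t ih =>
    simp only [List.map_cons, cfVal, ih]
    cases h : cfVal t with
    | none => simp
    | some x =>
      simp only [Option.map_some]
      by_cases hx : x = 0
      · simp [hx]
      · rw [if_neg hx, if_neg (by simpa using hx)]
        simp only [Option.map_some, Option.some.injEq]
        push_cast
        ring

lemma typ_cons (a : ℤ) (t : List ℤ) (j : ℕ) :
    typ (a :: t) (j + 2) = - typ t (j + 1) := by
  simp only [typ, if_neg (by omega : ¬ j + 2 = 0), if_neg (by omega : ¬ j + 1 = 0)]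
  have h1 : j + 2 - 1 = j + 1 := by omega
  have h2 : j + 1 - 1 = j := by omega
  rw [h1, h2]
  simp only [List.getD_cons_succ]
  ring

lemma QCond_tail (a : ℤ) (t : List ℤ) (h : QCond (a :: t)) : QCond t := by
  obtain ⟨h1, h2⟩ := h
  constructor
  · intro x hx; exact h1 x (List.mem_cons_of_mem _ hx)
  · intro i hi hlen hty
    obtain ⟨j, rfl⟩ : ∃ j, i = j + 1 := ⟨i - 1, by omega⟩
    have hty' : typ (a :: t) (j + 2) = typ (a :: t) (j + 3) := by
      rw [typ_cons, typ_cons, hty]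
    have := h2 (j + 2) (by omega) (by simp; omega) hty'
    simpa using this
lemma ell_shift (c : ℤ) (cs : List ℤ) (hc : c < 0) (j : ℕ) :
    ell (1 :: (-c - 1) :: cs.map (fun x => -x)) (j + 2) = ell (c :: cs) (j + 1) := by
  simp only [ell, List.take_succ_cons, List.map_cons, List.sum_cons]
  have h : ((cs.map (fun x => -x)).take j).map Int.natAbs = (cs.take j).map Int.natAbs := by
    rw [← List.map_take, List.map_map]
    congr 1
    funext x
    simp
  rw [h]
  omega

lemma ell_one (c : ℤ) (cs : List ℤ) :
    ell (1 :: (-c - 1) :: cs.map (fun x => -x)) 1 = 1 := by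
  simp [ell]

lemma ell_total (c : ℤ) (cs : List ℤ) (hc : c < 0) :
    ell (1 :: (-c - 1) :: cs.map (fun x => -x))
      (1 :: (-c - 1) :: cs.map (fun x => -x)).length = ell (c :: cs) (c :: cs).length := by
  have h := ell_shift c cs hc cs.length
  simpa using h

lemma typ_shift (c : ℤ) (cs : List ℤ) (hc : c < 0) (j : ℕ)
    (hj1 : 1 ≤ j) (hj : 2 ≤ j ∨ c ≤ -2) :
    typ (1 :: (-c - 1) :: cs.map (fun x => -x)) (j + 1) = typ (c :: cs) j := by
  rcases le_or_gt 2 j with hj2 | hj2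
  · obtain ⟨k, rfl⟩ : ∃ k, j = k + 2 := ⟨j - 2, by omega⟩
    clear hj
    simp only [typ, if_neg (by omega : ¬ k + 2 + 1 = 0), if_neg (by omega : ¬ k + 2 = 0)]
    have h1 : k + 2 + 1 - 1 = k + 2 := by omega
    have h2 : k + 2 - 1 = k + 1 := by omega
    rw [h1, h2]
    simp only [List.getD_cons_succ]
    rw [getD_map_neg, Int.sign_neg]
    ring
  · have hc2 : c ≤ -2 := by omega
    obtain ⟨rfl⟩ : j = 1 := by omega
    simp only [typ, if_neg (by omega : ¬ (2:ℕ) = 0), if_neg (by omega : ¬ (1:ℕ) = 0)]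
    norm_num [Int.sign_eq_one_of_pos (show (0:ℤ) < -c - 1 by omega),
      Int.sign_eq_neg_one_of_neg hc]

lemma typ_one' (c : ℤ) (cs : List ℤ) :
    typ (1 :: (-c - 1) :: cs.map (fun x => -x)) 1 = 1 := by
  simp [typ]

lemma typ_two'_nonpos (c : ℤ) (cs : List ℤ) (hc : c < 0) :
    typ (1 :: (-c - 1) :: cs.map (fun x => -x)) 2 ≤ 0 := by
  simp only [typ, if_neg (by omega : ¬ (2:ℕ) = 0)]
  norm_num
  omega
lemma cond_shift (c : ℤ) (cs : List ℤ) (hQ : QCond (c :: cs)) (hc : c < 0)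
    (i : ℕ) (hi1 : 1 ≤ i) (hi2 : i + 1 ≤ (c :: cs).length) :
    (typ (1 :: (-c - 1) :: cs.map (fun x => -x)) (i + 1) =
     typ (1 :: (-c - 1) :: cs.map (fun x => -x)) (i + 2)) ↔
    (typ (c :: cs) i = typ (c :: cs) (i + 1)) := by
  by_cases h2 : 2 ≤ i
  · rw [typ_shift c cs hc i (by omega) (Or.inl h2),
        show i + 2 = (i + 1) + 1 by omega,
        typ_shift c cs hc (i + 1) (by omega) (Or.inl (by omega))]
  · have hi : i = 1 := by omega
    subst hi
    by_cases hc2 : c ≤ -2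
    · rw [typ_shift c cs hc 1 le_rfl (Or.inr hc2),
        show (1:ℕ) + 2 = 2 + 1 by omega,
        typ_shift c cs hc 2 (by omega) (Or.inl le_rfl)]
    · have hc1 : c = -1 := by omega
      obtain ⟨d, t, rfl⟩ : ∃ d t, cs = d :: t := by
        cases cs with
        | nil => simp at hi2
        | cons d t => exact ⟨d, t, rfl⟩
      have hd0 : d ≠ 0 := hQ.1 d (by simp)
      have ht2 : typ (1 :: (-c - 1) :: (d :: t).map (fun x => -x)) 2 = 0 := by
        subst hc1
        simp [typ]
      have ht3 : typ (1 :: (-c - 1) :: (d :: t).map (fun x => -x)) 3 =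
          typ (c :: d :: t) 2 :=
        typ_shift c (d :: t) hc 2 (by omega) (Or.inl le_rfl)
      have ht2' : typ (c :: d :: t) 2 ≠ 0 := by
        simp only [typ, if_neg (by omega : ¬ (2:ℕ) = 0)]
        simp [Int.sign_eq_zero_iff_zero, hd0]
      constructor
      · intro h
        rw [ht2] at h
        rw [show (1:ℕ) + 2 = 3 by rfl, ht3] at h
        exact absurd h.symm ht2'
      · intro h
        exfalso
        have := hQ.2 1 le_rfl (by simp) h
        rw [show (1:ℕ) - 1 = 0 from rfl] at this
        simp only [List.getD_cons_zero] at this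
        omega

lemma cond_one' (c : ℤ) (cs : List ℤ) (hc : c < 0) :
    ¬ (typ (1 :: (-c - 1) :: cs.map (fun x => -x)) 1 =
       typ (1 :: (-c - 1) :: cs.map (fun x => -x)) 2) := by
  rw [typ_one']
  have := typ_two'_nonpos c cs hc
  omega

lemma kept_iff (c : ℤ) (cs : List ℤ) (hQ : QCond (c :: cs)) (hc : c < 0) (v : ℕ) :
    kept (1 :: (-c - 1) :: cs.map (fun x => -x)) v ↔ kept (c :: cs) v := by
  have hlen : (1 :: (-c - 1) :: cs.map (fun x => -x)).length = cs.length + 2 := by simp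
  have hlen2 : (c :: cs).length = cs.length + 1 := by simp
  unfold kept
  rw [ell_total c cs hc]
  refine and_congr_right fun _ => and_congr_right fun _ => ⟨fun h3 => ?_, fun h3 => ?_⟩
  · intro i hi hcond
    rw [Finset.mem_Ico, hlen2] at hi
    obtain ⟨j, rfl⟩ : ∃ j, i = j + 1 := ⟨i - 1, by omega⟩
    have hcnd' := (cond_shift c cs hQ hc (j + 1) (by omega) (by omega)).mpr hcond
    have h := h3 (j + 2) (by rw [Finset.mem_Ico, hlen]; omega) hcnd'
    rwa [ell_shift c cs hc j] at h
  · intro i hi hcond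
    rw [Finset.mem_Ico, hlen] at hi
    rcases Nat.lt_or_ge i 2 with h1 | h1
    · have : i = 1 := by omega
      subst this
      exact absurd hcond (cond_one' c cs hc)
    · obtain ⟨j, rfl⟩ : ∃ j, i = j + 2 := ⟨i - 2, by omega⟩
      have hcnd' := (cond_shift c cs hQ hc (j + 1) (by omega) (by omega)).mp hcond
      have h := h3 (j + 1) (by rw [Finset.mem_Ico, hlen2]; omega) hcnd'
      rwa [ell_shift c cs hc j]

lemma QFinset_eq (c : ℤ) (cs : List ℤ) (hQ : QCond (c :: cs)) (hc : c < 0) :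
    QFinset (1 :: (-c - 1) :: cs.map (fun x => -x)) = QFinset (c :: cs) := by
  unfold QFinset
  ext v
  simp only [Finset.mem_filter, Finset.mem_Ioo, ell_total c cs hc,
    kept_iff c cs hQ hc]
lemma seg_shift (c : ℤ) (cs : List ℤ) (hc : c < 0) (v : ℕ) (hv : 2 ≤ v) :
    seg (1 :: (-c - 1) :: cs.map (fun x => -x)) v = seg (c :: cs) v + 1 := by
  unfold seg
  have hlen : (1 :: (-c - 1) :: cs.map (fun x => -x)).length = cs.length + 2 := by simp
  have hlen2 : (c :: cs).length = cs.length + 1 := by simp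
  rw [hlen, hlen2]
  have hset : (Finset.range (cs.length + 2)).filter
      (fun i => ell (1 :: (-c - 1) :: cs.map (fun x => -x)) (i + 1) < v) =
      insert 0 (((Finset.range (cs.length + 1)).filter
        (fun i => ell (c :: cs) (i + 1) < v)).image (· + 1)) := by
    ext a
    simp only [Finset.mem_filter, Finset.mem_range, Finset.mem_insert, Finset.mem_image]
    constructor
    · rintro ⟨ha, hlt⟩
      rcases Nat.eq_zero_or_pos a with rfl | hpos
      · exact Or.inl rfl
      · obtain ⟨b, rfl⟩ : ∃ b, a = b + 1 := ⟨a - 1, by omega⟩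
        refine Or.inr ⟨b, ⟨by omega, ?_⟩, rfl⟩
        rwa [ell_shift c cs hc b] at hlt
    · rintro (rfl | ⟨b, ⟨hb, hlt⟩, rfl⟩)
      · refine ⟨by omega, ?_⟩
        rw [ell_one c cs]
        omega
      · refine ⟨by omega, ?_⟩
        rw [ell_shift c cs hc b]
        exact hlt
  rw [hset, Finset.card_insert_of_notMem (by simp),
    Finset.card_image_of_injective _ (add_left_injective 1)]
  omega

lemma typ_seg (c : ℤ) (cs : List ℤ) (hc : c < 0) (v : ℕ) (hv : 2 ≤ v) :
    typ (1 :: (-c - 1) :: cs.map (fun x => -x))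
      (seg (1 :: (-c - 1) :: cs.map (fun x => -x)) v) = typ (c :: cs) (seg (c :: cs) v) := by
  rw [seg_shift c cs hc v hv]
  apply typ_shift c cs hc (seg (c :: cs) v) (by unfold seg; omega)
  by_cases h : 2 ≤ seg (c :: cs) v
  · exact Or.inl h
  · right
    have hcard : ((Finset.range (c :: cs).length).filter
        (fun i => ell (c :: cs) (i + 1) < v)).card = 0 := by
      unfold seg at h; omega
    have h0 : ¬ (ell (c :: cs) 1 < v) := by
      intro hlt
      have hmem : 0 ∈ (Finset.range (c :: cs).length).filter
          (fun i => ell (c :: cs) (i + 1) < v) := by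
        simp only [Finset.mem_filter, Finset.mem_range]
        exact ⟨by simp, hlt⟩
      have := Finset.card_pos.mpr ⟨0, hmem⟩
      omega
    have he1 : ell (c :: cs) 1 = c.natAbs := by simp [ell]
    omega

lemma edgeSign_shift (c : ℤ) (cs : List ℤ) (hc : c < 0) (u v : ℕ) (hv : 2 ≤ v) :
    edgeSign (1 :: (-c - 1) :: cs.map (fun x => -x)) u v = edgeSign (c :: cs) u v := by
  unfold edgeSign
  rw [typ_seg c cs hc v hv]

lemma consec_iff (c : ℤ) (cs : List ℤ) (hQ : QCond (c :: cs)) (hc : c < 0) (u v : ℕ) :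
    consec (1 :: (-c - 1) :: cs.map (fun x => -x)) u v ↔ consec (c :: cs) u v := by
  unfold consec
  simp only [kept_iff c cs hQ hc]

lemma pcov_iff (c : ℤ) (cs : List ℤ) (hQ : QCond (c :: cs)) (hc : c < 0) (u v : ℕ) :
    pcov (1 :: (-c - 1) :: cs.map (fun x => -x)) u v ↔ pcov (c :: cs) u v := by
  unfold pcov
  rw [consec_iff c cs hQ hc, consec_iff c cs hQ hc]
  have h1 : ∀ a b : ℕ, consec (c :: cs) a b → 2 ≤ b := by
    intro a b h
    have := h.1.1
    have := h.2.2.1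
    omega
  constructor
  · rintro (⟨h, he⟩ | ⟨h, he⟩)
    · exact Or.inl ⟨h, by rwa [edgeSign_shift c cs hc u v (h1 _ _ h)] at he⟩
    · exact Or.inr ⟨h, by rwa [edgeSign_shift c cs hc v u (h1 _ _ h)] at he⟩
  · rintro (⟨h, he⟩ | ⟨h, he⟩)
    · exact Or.inl ⟨h, by rwa [edgeSign_shift c cs hc u v (h1 _ _ h)]⟩
    · exact Or.inr ⟨h, by rwa [edgeSign_shift c cs hc v u (h1 _ _ h)]⟩

lemma ple_iff' (c : ℤ) (cs : List ℤ) (hQ : QCond (c :: cs)) (hc : c < 0) (u v : ℕ) :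
    ple (1 :: (-c - 1) :: cs.map (fun x => -x)) u v ↔ ple (c :: cs) u v :=
  ⟨Relation.ReflTransGen.mono (fun a b h => (pcov_iff c cs hQ hc a b).mp h) u v,
   Relation.ReflTransGen.mono (fun a b h => (pcov_iff c cs hQ hc a b).mpr h) u v⟩
lemma one_div_bounds_pos {x : ℚ} (h : 1 ≤ x) : 0 < 1 / x ∧ 1 / x ≤ 1 := by
  have hx : 0 < x := lt_of_lt_of_le one_pos h
  exact ⟨div_pos one_pos hx, (div_le_one hx).mpr h⟩

lemma one_div_bounds_neg {x : ℚ} (h : x ≤ -1) : -1 ≤ 1 / x ∧ 1 / x < 0 := by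
  have hx : x < 0 := lt_of_le_of_lt h (by norm_num)
  constructor
  · rw [le_div_iff_of_neg hx]
    linarith
  · exact div_neg_of_pos_of_neg one_pos hx

lemma typ_one (a : ℤ) (t : List ℤ) : typ (a :: t) 1 = Int.sign a := by
  simp [typ]

lemma typ_two (a b : ℤ) (t : List ℤ) : typ (a :: b :: t) 2 = - Int.sign b := by
  simp only [typ, if_neg (by omega : ¬ (2:ℕ) = 0)]
  norm_num

lemma cfVal_cons_some {a : ℤ} {cs : List ℤ} {x : ℚ} (h : cfVal cs = some x)
    (hx : x ≠ 0) : cfVal (a :: cs) = some ((a : ℚ) + 1 / x) := by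
  unfold cfVal
  rw [h]
  simp [hx]

lemma cfVal_cons_none {a : ℤ} {cs : List ℤ} (h : cfVal cs = none) :
    cfVal (a :: cs) = some (a : ℚ) := by
  unfold cfVal
  rw [h]

lemma cfVal_bound : ∀ (cs : List ℤ) (c : ℤ), QCond (c :: cs) →
    ∃ z : ℚ, cfVal (c :: cs) = some z ∧ (0 < c → 1 ≤ z) ∧ (c < 0 → z ≤ -1) := by
  intro cs
  induction cs with
  | nil =>
    intro c h
    refine ⟨(c : ℚ), by simp [cfVal], ?_, ?_⟩
    · intro h0
      have : (1 : ℤ) ≤ c := h0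
      exact_mod_cast this
    · intro h0
      have : c ≤ -1 := by omega
      exact_mod_cast this
  | cons d t ih =>
    intro c h
    obtain ⟨x, hx, hx1, hx2⟩ := ih d (QCond_tail c (d :: t) h)
    have hc0 : c ≠ 0 := h.1 c (by simp)
    have hd0 : d ≠ 0 := h.1 d (by simp)
    have hmix : Int.sign c = - Int.sign d → 2 ≤ c.natAbs := by
      intro hs
      have hty : typ (c :: d :: t) 1 = typ (c :: d :: t) 2 := by
        rw [typ_one, typ_two, hs]
      have h2 := (h.2 1 le_rfl (by simp) hty).1
      simp at h2; omega
    rcases lt_or_gt_of_ne hd0 with hd | hd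
    · have hxb := hx2 hd
      have hxne : x ≠ 0 := by intro h0; rw [h0] at hxb; norm_num at hxb
      obtain ⟨hb1, hb2⟩ := one_div_bounds_neg hxb
      refine ⟨(c : ℚ) + 1 / x, cfVal_cons_some hx hxne, ?_, ?_⟩
      · intro hcpos
        have h2 : 2 ≤ c := by
          have := hmix (by rw [Int.sign_eq_one_of_pos hcpos, Int.sign_eq_neg_one_of_neg hd]; norm_num)
          omega
        have : (2 : ℚ) ≤ (c : ℚ) := by exact_mod_cast h2
        linarith
      · intro hcneg
        have h1 : c ≤ -1 := by omega
        have : (c : ℚ) ≤ -1 := by exact_mod_cast h1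
        linarith
    · have hxb := hx1 hd
      have hxne : x ≠ 0 := by intro h0; rw [h0] at hxb; norm_num at hxb
      obtain ⟨hb1, hb2⟩ := one_div_bounds_pos hxb
      refine ⟨(c : ℚ) + 1 / x, cfVal_cons_some hx hxne, ?_, ?_⟩
      · intro hcpos
        have h1 : (1 : ℤ) ≤ c := hcpos
        have : (1 : ℚ) ≤ (c : ℚ) := by exact_mod_cast h1
        linarith
      · intro hcneg
        have h2 : c ≤ -2 := by
          have := hmix (by rw [Int.sign_eq_neg_one_of_neg hcneg, Int.sign_eq_one_of_pos hd])
          omega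
        have : (c : ℚ) ≤ -2 := by exact_mod_cast h2
        linarith
lemma pqPlus_some (y : ℚ) : pqPlus (some y) =
    if (y.num.sign * (y.den : ℤ)) + (y.num.natAbs : ℤ) = 0 then none
    else some (((y.num.natAbs : ℤ) : ℚ) /
      (((y.num.sign * (y.den : ℤ)) + (y.num.natAbs : ℤ) : ℤ) : ℚ)) := rfl

lemma cfVal_part (c : ℤ) (cs : List ℤ) (hQ : QCond (c :: cs)) (hc : c < 0) :
    cfVal (1 :: (-c - 1) :: cs.map (fun x => -x)) = pqPlus (cfVal (c :: cs)) := by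
  obtain ⟨z, hz, _, hz2⟩ := cfVal_bound cs c hQ
  have hzneg : z ≤ -1 := hz2 hc
  have hnil : cfVal ([] : List ℤ) = none := rfl
  have key : cfVal ((-c - 1) :: cs.map (fun x => -x)) = some (-(z + 1)) := by
    cases cs with
    | nil =>
      have hzc : z = (c : ℚ) := by
        rw [cfVal_cons_none hnil] at hz
        exact (Option.some_injective _ hz).symm
      rw [show (([] : List ℤ).map fun x => -x) = [] from rfl, cfVal_cons_none hnil, hzc]
      congr 1
      push_cast
      ring
    | cons d t =>
      obtain ⟨x, hx, hx1, hx2⟩ := cfVal_bound t d (QCond_tail c (d :: t) hQ)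
      have hd0 : d ≠ 0 := hQ.1 d (by simp)
      have hxne : x ≠ 0 := by
        rcases lt_or_gt_of_ne hd0 with hd | hd
        · have := hx2 hd; intro h0; rw [h0] at this; norm_num at this
        · have := hx1 hd; intro h0; rw [h0] at this; norm_num at this
      have hz' : z = (c : ℚ) + 1 / x := by
        rw [cfVal_cons_some hx hxne] at hz
        exact (Option.some_injective _ hz).symm
      have h1 : cfVal ((d :: t).map (fun x => -x)) = some (-x) := by
        rw [cfVal_map_neg, hx]
        rfl
      rw [cfVal_cons_some h1 (neg_ne_zero.mpr hxne), hz']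
      congr 1
      have hinv : 1 / (-x) = -(1 / x) := by field_simp
      rw [hinv]
      push_cast
      ring
  rw [hz]
  have hnum : z.num < 0 := by
    rw [Rat.num_neg]
    linarith
  have hsign : z.num.sign = -1 := Int.sign_eq_neg_one_of_neg hnum
  have hdq : (0 : ℚ) < (z.den : ℚ) := by
    have := z.pos
    exact_mod_cast this
  have hzq : (z.num : ℚ) = z * (z.den : ℚ) := (Rat.mul_den_eq_num z).symm
  rcases lt_or_eq_of_le hzneg with hlt | heq
  · have hndq : (z.num : ℚ) + (z.den : ℚ) < 0 := by nlinarith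
    have hnd : z.num + (z.den : ℤ) < 0 := by exact_mod_cast hndq
    have hcond : ¬ (z.num.sign * (z.den : ℤ) + (z.num.natAbs : ℤ) = 0) := by
      rw [hsign]
      omega
    have hne : -(z + 1) ≠ 0 := by
      intro h0
      have : z = -1 := by linarith [neg_eq_zero.mp h0]
      linarith
    rw [cfVal_cons_some key hne]
    rw [pqPlus_some, if_neg hcond]
    congr 1
    rw [hsign]
    have hz1 : z + 1 ≠ 0 := by intro h0; linarith
    have hna : ((z.num.natAbs : ℤ) : ℚ) = -(z.num : ℚ) := by
      have h : (z.num.natAbs : ℤ) = -z.num := by omega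
      rw [h]
      push_cast
      ring
    have hsum : ((-1 * (z.den : ℤ) + (z.num.natAbs : ℤ) : ℤ) : ℚ) =
        -((z.num : ℚ) + (z.den : ℚ)) := by
      have h : (-1 * (z.den : ℤ) + (z.num.natAbs : ℤ)) = -(z.num + z.den) := by omega
      rw [h]
      push_cast
      ring
    rw [hna, hsum]
    have hnsum : (z.num : ℚ) + (z.den : ℚ) ≠ 0 := ne_of_lt hndq
    have hne2 : -((z.num : ℚ) + (z.den : ℚ)) ≠ 0 := neg_ne_zero.mpr hnsum
    push_cast
    rw [eq_div_iff hne2, div_neg]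
    field_simp
    linear_combination hzq
  · have hm1 : z = -1 := heq
    have key0 : cfVal ((-c - 1) :: cs.map (fun x => -x)) = some 0 := by
      rw [key, hm1]
      norm_num
    have hL : cfVal (1 :: (-c - 1) :: cs.map (fun x => -x)) = none := by
      unfold cfVal
      rw [key0]
      simp
    rw [hL, hm1]
    have hcond0 : ((-1 : ℚ).num.sign * ((-1 : ℚ).den : ℤ) + ((-1 : ℚ).num.natAbs : ℤ)) = 0 := by
      norm_num
    rw [pqPlus_some, if_pos hcond0]

/-- If `[c₁,…,cₙ]` satisfies the conditions of Definition 3.5 with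
`c₁ < 0`, and `[c₁,…,cₙ] = p/q` (`p ≥ 0`, `gcd(p,q) = 1`), then
`[1, −c₁ − 1, −c₂, …, −cₙ] = p/(q + p)` and the labeled path posets
`Q[c₁,…,cₙ]` and `Q[1, −c₁ − 1, −c₂, …, −cₙ]` are identical. -/
theorem negative_head_cf_poset (c : ℤ) (cs : List ℤ)
    (hQ : QCond (c :: cs)) (hc : c < 0) :
    cfVal (1 :: (-c - 1) :: cs.map (fun x => -x)) = pqPlus (cfVal (c :: cs)) ∧
    QFinset (1 :: (-c - 1) :: cs.map (fun x => -x)) = QFinset (c :: cs) ∧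
    (∀ u v : ℕ, ple (1 :: (-c - 1) :: cs.map (fun x => -x)) u v ↔ ple (c :: cs) u v) :=
  ⟨cfVal_part c cs hQ hc, QFinset_eq c cs hQ hc, ple_iff' c cs hQ hc⟩
end

section
/- Let [b_1,…,b_n] be an even continued fraction with b_1 > 0. Then Π_{i∈S_1} φ_P(y_i) = l^{|b_1|}·w^{−1}, as elements of K = ℚ(l,s) with q = s². -/
open scoped BigOperators

open Classical in
/-- The F-polynomial `F[c₁,…,cₙ] = F(Q[c₁,…,cₙ]) = Σ_I Π_{i∈I} y_i ∈ ℤ[y₁,y₂,…]`,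
the sum over all order ideals `I` of `Q[c₁,…,cₙ]`. -/
noncomputable def Fpoly (L : List ℤ) : MvPolynomial ℕ ℤ :=
  ∑ I ∈ (QFinset L).powerset, if isIdeal L I then ∏ i ∈ I, MvPolynomial.X i else 0

/-- The label set of the chain `S_m`: the labels `ℓ_{m−1}+1, …, ℓ_m − 1`. -/
def SmSet (L : List ℤ) (m : ℕ) : Finset ℕ := Finset.Ioo (ell L (m - 1)) (ell L m)

/-- `lam L m j = λ_m(j)`, the `j`-th vertex of `S_m` from the bottom:
`ℓ_{m−1}+j` if `t_m = 1` and `ℓ_m − j` if `t_m = −1`. -/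
def lam (L : List ℤ) (m j : ℕ) : ℕ :=
  if typ L m = 1 then ell L (m - 1) + j else ell L m - j

/-- Order ideals of the chain `S_m` (ordered by labels if `t_m = 1`, reversed if `t_m = −1`). -/
def chainIdeal (L : List ℤ) (m : ℕ) (I : Finset ℕ) : Prop :=
  I ⊆ SmSet L m ∧
  ∀ u ∈ SmSet L m, ∀ v ∈ SmSet L m,
    (if typ L m = 1 then u ≤ v else v ≤ u) → v ∈ I → u ∈ I

open Classical in
/-- The F-polynomial `F(S_m)` of the chain `S_m`. -/
noncomputable def FS (L : List ℤ) (m : ℕ) : MvPolynomial ℕ ℤ :=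
  ∑ I ∈ (SmSet L m).powerset, if chainIdeal L m I then ∏ i ∈ I, MvPolynomial.X i else 0

noncomputable section

/-- The field `K = ℚ(l,s)` of rational functions in two variables over `ℚ`. -/
abbrev KK : Type := FractionRing (MvPolynomial (Fin 2) ℚ)

/-- The variable `l` of `K = ℚ(l,s)`. -/
def lK : KK := algebraMap (MvPolynomial (Fin 2) ℚ) KK (MvPolynomial.X 0)

/-- The variable `s = q^{1/2}` of `K = ℚ(l,s)`. -/
def sK : KK := algebraMap (MvPolynomial (Fin 2) ℚ) KK (MvPolynomial.X 1)

/-- `q = s²`. -/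
def qK : KK := sK ^ 2

/-- `w = (1 − l²q)/(1 − q⁻¹)`. -/
def wK : KK := (1 - lK ^ 2 * qK) / (1 - qK⁻¹)

/-- The values of the specialization `φ_P` (associated to the even continued fraction `L`,
which only matters through the sign of `b₁`): `y₁ ↦ l²·w⁻¹` if `b₁ > 0` and `y₁ ↦ q⁻²·w`
if `b₁ < 0`; `y_{2i} ↦ −l²q` and `y_{2i+1} ↦ −q⁻¹` for `i ≥ 1`. -/
def phiPvar (L : List ℤ) (i : ℕ) : KK :=
  if i = 1 then (if 0 < L.headI then lK ^ 2 * wK⁻¹ else qK⁻¹ ^ 2 * wK)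
  else if i % 2 = 0 then -(lK ^ 2 * qK) else -qK⁻¹

/-- The specialization `φ_P : ℤ[y₁,y₂,…] → K`. -/
def phiP (L : List ℤ) (p : MvPolynomial ℕ ℤ) : KK :=
  MvPolynomial.eval₂ (Int.castRingHom KK) (phiPvar L) p

end

/-! The labels of `S₁` are `1, …, b₁ − 1` with `b₁ = 2k + 2`. Apart from `y₁ ↦ l²w⁻¹`, they
come in consecutive pairs `(y_{2j}, y_{2j+1}) ↦ (−l²q, −q⁻¹)`, each contributing `l²`,
so the product is `l² w⁻¹ · (l²)ᵏ = l^{b₁} w⁻¹`. -/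

theorem Finset.prod_Ico_one_two_mul_add_two {M : Type*} [CommMonoid M] (f : ℕ → M) (k : ℕ) :
    ∏ i ∈ Finset.Ico 1 (2 * k + 2), f i =
      f 1 * ∏ j ∈ Finset.range k, (f (2 * j + 2) * f (2 * j + 3)) := by
  induction k with
  | zero => simp
  | succ k ih =>
    rw [show 2 * (k + 1) + 2 = 2 * k + 3 + 1 by ring, Finset.prod_Ico_succ_top (by omega),
      Finset.prod_Ico_succ_top (by omega), ih, Finset.prod_range_succ]
    simp only [mul_assoc]

theorem Int.exists_natAbs_eq_two_mul_add_two {a : ℤ} (h2 : 2 ∣ a) (h0 : a ≠ 0) :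
    ∃ k : ℕ, a.natAbs = 2 * k + 2 := by
  obtain ⟨c, rfl⟩ := h2
  exact ⟨c.natAbs - 1, by omega⟩

theorem ell_one_s13 (L : List ℤ) : ell L 1 = L.headI.natAbs := by
  cases L <;> simp [ell]

theorem SmSet_one (L : List ℤ) : SmSet L 1 = Finset.Ico 1 L.headI.natAbs := by
  rw [SmSet, ell_one_s13, show ell L 0 = 0 by simp [ell]]
  rfl

theorem qK_ne_zero : qK ≠ 0 :=
  pow_ne_zero _ <| (map_ne_zero_iff _ (IsFractionRing.injective _ _)).mpr (MvPolynomial.X_ne_zero 1)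

theorem phiPvar_one_of_pos {L : List ℤ} (hb1 : 0 < L.headI) : phiPvar L 1 = lK ^ 2 * wK⁻¹ := by
  simp [phiPvar, hb1]

theorem phiPvar_pair (L : List ℤ) (j : ℕ) :
    phiPvar L (2 * j + 2) * phiPvar L (2 * j + 3) = lK ^ 2 := by
  have heven : (2 * j + 2) % 2 = 0 := by omega
  have hodd : (2 * j + 3) % 2 = 1 := by omega
  simp only [phiPvar, heven, hodd, show 2 * j + 2 ≠ 1 by omega, show 2 * j + 3 ≠ 1 by omega,
    if_false, if_true, one_ne_zero]
  field_simp [qK_ne_zero]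

theorem EvenCF.two_dvd_headI_and_ne_zero {L : List ℤ} (hL : EvenCF L) (hne : L ≠ []) :
    2 ∣ L.headI ∧ L.headI ≠ 0 := by
  obtain ⟨a, t, rfl⟩ := List.exists_cons_of_ne_nil hne
  exact hL a List.mem_cons_self

theorem phiP_first_chain_general (L : List ℤ) (hL : EvenCF L) (hb1 : 0 < L.headI) :
    ∏ i ∈ SmSet L 1, phiPvar L i = lK ^ L.headI.natAbs * wK⁻¹ := by
  have hne : L ≠ [] := by rintro rfl; exact lt_irrefl 0 hb1
  obtain ⟨h2, h0⟩ := hL.two_dvd_headI_and_ne_zero hne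
  obtain ⟨k, hk⟩ := Int.exists_natAbs_eq_two_mul_add_two h2 h0
  simp only [SmSet_one, hk, Finset.prod_Ico_one_two_mul_add_two, phiPvar_one_of_pos hb1,
    phiPvar_pair, Finset.prod_const, Finset.card_range]
  ring

/-- For an even continued fraction `[b₁,…,bₙ]` with `b₁ > 0`,
`Π_{i∈S₁} φ_P(y_i) = l^{|b₁|}·w⁻¹`. -/
theorem phiP_first_chain (L : List ℤ) (hL : EvenCF L) (hne : L ≠ []) (hb1 : 0 < L.headI) :
    ∏ i ∈ SmSet L 1, phiPvar L i = lK ^ L.headI.natAbs * wK⁻¹ :=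
  phiP_first_chain_general L hL hb1
end
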